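/- arXiv:1806.00190 — 4 statements merged into one kernel-verified Lean document; each statement's English description precedes it below -/
import Mathlib

section
/- For all reals s ≥ 0, c ≥ 1, and m̄ ≥ 0, one has (s + √s + c + m̄)/(s + c) ≤ 1 + (1/2) · 1/(√(m̄² + c) − m̄). Equivalently, (√s + m̄)/(s + c) ≤ (1/2)/(√(m̄² + c) − m̄). -/
theorem stmt_3 (s c m : ℝ) (hs : 0 ≤ s) (hc : 1 ≤ c) (hm : 0 ≤ m) :
    (s + Real.sqrt s + c + m) / (s + c) ≤
      1 + (1 / 2) * (1 / (Real.sqrt (m ^ 2 + c) - m)) := by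
  set t := Real.sqrt s with htdef
  set q := Real.sqrt (m ^ 2 + c) with hqdef
  have ht : 0 ≤ t := Real.sqrt_nonneg s
  have ht2 : t ^ 2 = s := Real.sq_sqrt hs
  have hq2 : q ^ 2 = m ^ 2 + c := Real.sq_sqrt (by positivity)
  have hqm : m < q := by
    nlinarith [Real.sqrt_nonneg (m ^ 2 + c)]
  have hqm' : 0 < q - m := by linarith
  have hsc : 0 < s + c := by linarith
  have key : 2 * (q - m) * (t + m) ≤ s + c := by
    nlinarith [sq_nonneg (t - (q - m))]
  rw [div_le_iff₀ hsc]
  have hu : (1 / (q - m)) * (q - m) = 1 := by field_simp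
  have hup : 0 ≤ 1 / (q - m) := by positivity
  nlinarith [mul_le_mul_of_nonneg_left key (by positivity : (0:ℝ) ≤ (1 / (q - m)) / 2), hu]
end

section
/- Let S be a measurable space, A a measurable space, and for j = 1,…,N let f_j : S → A be measurable functions, μ_j finite measures on S, and α_j ≥ 0 with ∑ α_j = 1. Define Q on S × A by Q(B × D) = ∑_j α_j μ_j({s ∈ B : f_j(s) ∈ D}), and let q = ∑_j α_j μ_j be its marginal on S. Then there exist measurable functions γ_j : S → [0,1] with ∑_j γ_j(s) = 1 for all s, such that the kernel φ(·|s) := ∑_j γ_j(s) δ_{f_j(s)}(·) disintegrates Q, i.e., Q(B × D) = ∫_B φ(D|s) q(ds) for all measurable B ⊆ S, D ⊆ A. -/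
/-! The weights are Radon–Nikodym derivatives: with `νⱼ = αⱼ μⱼ` and `q = ∑ νⱼ`, the densities
`gⱼ = dνⱼ/dq` sum to `1` `q`-almost everywhere, and
`Q(B × D) = ∑ⱼ νⱼ(B ∩ fⱼ⁻¹ D) = ∑ⱼ ∫_{B ∩ fⱼ⁻¹ D} gⱼ dq`.
Redefining the `gⱼ` on the exceptional `q`-null set makes them sum to `1` everywhere. -/

open MeasureTheory
open scoped ENNReal

namespace MeasureTheory

variable {S ι : Type*} [MeasurableSpace S]

theorem Measure.rnDeriv_finsetSum (t : Finset ι) (ν : ι → Measure S)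
    [∀ j, IsFiniteMeasure (ν j)] (μ : Measure S) [SigmaFinite μ] :
    (∑ j ∈ t, ν j).rnDeriv μ =ᵐ[μ] ∑ j ∈ t, (ν j).rnDeriv μ := by
  classical
  induction t using Finset.induction_on with
  | empty => simp [Measure.rnDeriv_zero μ]
  | insert a t ha ih =>
    rw [Finset.sum_insert ha, Finset.sum_insert ha]
    filter_upwards [Measure.rnDeriv_add (ν a) (∑ j ∈ t, ν j) μ, ih] with s hadd hsum
    simp only [hadd, Pi.add_apply, hsum]

theorem Measure.ae_sum_rnDeriv_sum_eq_one [Fintype ι] (ν : ι → Measure S)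
    [∀ j, IsFiniteMeasure (ν j)] :
    ∀ᵐ s ∂(∑ j, ν j), ∑ j, (ν j).rnDeriv (∑ i, ν i) s = 1 := by
  filter_upwards [Measure.rnDeriv_finsetSum Finset.univ ν (∑ i, ν i),
    Measure.rnDeriv_self (∑ i, ν i)] with s hsum hself
  rw [← Finset.sum_apply, ← hsum, hself]

theorem exists_measurable_sum_eq_one_ae_eq [Fintype ι] [Nonempty ι] {q : Measure S}
    {g : ι → S → ℝ≥0∞} (hg : ∀ j, Measurable (g j)) (hsum : ∀ᵐ s ∂q, ∑ j, g j s = 1) :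
    ∃ γ : ι → S → ℝ≥0∞,
      (∀ j, Measurable (γ j)) ∧ (∀ s, ∑ j, γ j s = 1) ∧ ∀ j, γ j =ᵐ[q] g j := by
  classical
  let E : Set S := {s | ∑ j, g j s = 1}
  have hE : MeasurableSet E :=
    Finset.measurable_sum Finset.univ (fun j _ => hg j) (measurableSet_singleton 1)
  let j₀ : ι := Classical.arbitrary ι
  refine ⟨fun j => E.piecewise (g j) fun _ => (Pi.single j₀ 1 : ι → ℝ≥0∞) j,
    fun j => ?_, fun s => ?_, fun j => ?_⟩
  · exact (hg j).piecewise hE measurable_const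
  · by_cases hs : s ∈ E
    · simp only [Set.piecewise_eq_of_mem _ _ _ hs]
      exact hs
    · simp [Set.piecewise_eq_of_notMem _ _ _ hs]
  · filter_upwards [hsum] with s hs
    exact Set.piecewise_eq_of_mem _ _ _ hs

theorem setLIntegral_mul_indicator_one {q : Measure S} (γ : S → ℝ≥0∞) (B : Set S)
    {T : Set S} (hT : MeasurableSet T) :
    ∫⁻ s in B, γ s * T.indicator (fun _ => 1) s ∂q = ∫⁻ s in B ∩ T, γ s ∂q := by
  simp_rw [← Set.indicator_mul_right, mul_one]
  rw [lintegral_indicator hT, Measure.restrict_restrict hT, Set.inter_comm]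

end MeasureTheory

theorem stmt_6 {S A : Type*} [MeasurableSpace S] [MeasurableSpace A] (N : ℕ)
    (f : Fin N → S → A) (hf : ∀ j, Measurable (f j))
    (μ : Fin N → Measure S) [∀ j, IsFiniteMeasure (μ j)]
    (α : Fin N → NNReal) (hα : ∑ j, α j = 1)
    (q : Measure S) (hq : q = ∑ j, (α j : ENNReal) • μ j) :
    ∃ γ : Fin N → S → ENNReal,
      (∀ j, Measurable (γ j)) ∧ (∀ j s, γ j s ≤ 1) ∧ (∀ s, ∑ j, γ j s = 1) ∧
      ∀ B D : Set _, MeasurableSet B → MeasurableSet D →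
        ∑ j, (α j : ENNReal) * μ j (B ∩ f j ⁻¹' D) =
          ∫⁻ s in B, ∑ j, γ j s * Set.indicator (f j ⁻¹' D) (fun _ => 1) s ∂q := by
  have : Nonempty (Fin N) := Fin.pos_iff_nonempty.mp <| Nat.pos_of_ne_zero <| by
    rintro rfl
    simp at hα
  set ν : Fin N → Measure S := fun j => (α j : ℝ≥0∞) • μ j
  have : ∀ j, IsFiniteMeasure (ν j) := fun j =>
    isFiniteMeasureSMulOfNNRealTower (μ := μ j) (r := α j)
  subst hq
  have hν : ∀ j, ν j ≪ ∑ i, ν i := fun j => Measure.absolutelyContinuous_of_le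
    (Finset.single_le_sum (fun i _ => Measure.zero_le (ν i)) (Finset.mem_univ j))
  obtain ⟨γ, hγ, hγsum, hγae⟩ := exists_measurable_sum_eq_one_ae_eq
    (fun j => Measure.measurable_rnDeriv (ν j) _) (Measure.ae_sum_rnDeriv_sum_eq_one ν)
  refine ⟨γ, hγ, fun j s => (Finset.single_le_sum (fun i _ => zero_le)
    (Finset.mem_univ j)).trans_eq (hγsum s), hγsum, fun B D _ hD => ?_⟩
  have hmeas : ∀ j, Measurable fun s => γ j s * (f j ⁻¹' D).indicator (fun _ => 1) s :=
    fun j => (hγ j).mul (measurable_const.indicator (hf j hD))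
  rw [lintegral_finsetSum _ fun j _ => hmeas j]
  refine Finset.sum_congr rfl fun j _ => ?_
  rw [setLIntegral_mul_indicator_one _ _ (hf j hD),
    lintegral_congr_ae (ae_restrict_of_ae (hγae j)), Measure.setLIntegral_rnDeriv (hν j)]
  rfl
end

section
/- Let Y be a metric space, (η_n) a sequence of finite Borel measures on Y converging weakly to a finite measure η, and v : Y → [-∞, ∞] an upper semicontinuous function whose positive part v⁺ = max(v, 0) is uniformly integrable with respect to the family {η_n : n ∈ ℕ}, i.e. lim_{l→∞} sup_n ∫_Y v⁺·1{v⁺ ≥ l} dη_n = 0. Then ∫_Y v dη ≥ limsup_{n→∞} ∫_Y v dη_n. -/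
/-!
Write `∫ v = ∫ v⁺ - ∫ v⁻`. Since `v⁻` is lower semicontinuous, the layer-cake formula turns
`∫ v⁻ dη` into an integral of measures of open sets, so the portmanteau theorem and Fatou's lemma
give `∫ v⁻ dη ≤ liminf ∫ v⁻ dηₙ`. Dually, each truncation `min v⁺ l` is bounded and upper
semicontinuous, so closed sets and the reverse Fatou lemma give
`limsup ∫ min v⁺ l dηₙ ≤ ∫ min v⁺ l dη`. Uniform integrability bounds `∫ v⁺ dηₙ - ∫ min v⁺ l dηₙ`
uniformly in `n` by a quantity tending to `0` as `l → ∞`; hence `limsup ∫ v⁺ dηₙ ≤ ∫ v⁺ dη`, and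
this limsup is finite, which is what allows the two bounds to be subtracted in `EReal`.
-/

open MeasureTheory Filter

/-- The positive part of an extended real number, as an extended nonnegative real. -/
noncomputable def EReal.posPart' (x : EReal) : ENNReal :=
  if x = ⊤ then ⊤ else ENNReal.ofReal x.toReal

/-- The (possibly infinite) integral of an extended-real-valued function,
defined via positive and negative parts. -/
noncomputable def erealIntegral {Y : Type*} [MeasurableSpace Y]
    (η : Measure Y) (v : Y → EReal) : EReal :=
  ((∫⁻ y, (v y).posPart' ∂η : ENNReal) : EReal) -
    ((∫⁻ y, (-(v y)).posPart' ∂η : ENNReal) : EReal)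

open Set
open scoped ENNReal Topology

theorem EReal.posPart'_eq_toENNReal : EReal.posPart' = EReal.toENNReal := rfl

namespace ENNReal

theorem continuous_toReal_min {c : ℝ≥0∞} (hc : c ≠ ∞) :
    Continuous fun x : ℝ≥0∞ => (min x c).toReal :=
  continuousOn_toReal.comp_continuous (continuous_id.min continuous_const) fun _ =>
    ne_top_of_le_ne_top hc (min_le_right _ _)

theorem monotone_toReal_min {c : ℝ≥0∞} (hc : c ≠ ∞) :
    Monotone fun x : ℝ≥0∞ => (min x c).toReal := fun _ _ hxy =>
  toReal_mono (ne_top_of_le_ne_top hc (min_le_right _ _)) (min_le_min_right c hxy)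

theorem ofReal_toReal_min {c : ℝ≥0∞} (hc : c ≠ ∞) (x : ℝ≥0∞) :
    ENNReal.ofReal (min x c).toReal = min x c :=
  ofReal_toReal (ne_top_of_le_ne_top hc (min_le_right _ _))

end ENNReal

theorem MeasureTheory.lintegral_le_lintegral_min_add_setLIntegral {α : Type*}
    [MeasurableSpace α] {μ : Measure α} {f : α → ℝ≥0∞} (hf : Measurable f) (c : ℝ≥0∞) :
    ∫⁻ x, f x ∂μ ≤ ∫⁻ x, min (f x) c ∂μ + ∫⁻ x in {x | c ≤ f x}, f x ∂μ := by
  have hs : MeasurableSet {x | c ≤ f x} := measurableSet_le measurable_const hf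
  calc ∫⁻ x, f x ∂μ ≤ ∫⁻ x, (min (f x) c + {x | c ≤ f x}.indicator f x) ∂μ := by
        refine lintegral_mono fun x => ?_
        by_cases h : c ≤ f x
        · simp [indicator_of_mem (show x ∈ {x | c ≤ f x} from h)]
        · simp [indicator_of_notMem (show x ∉ {x | c ≤ f x} from h), (not_le.mp h).le]
    _ = _ := by rw [lintegral_add_left (hf.min measurable_const), lintegral_indicator hs]

namespace MeasureTheory.FiniteMeasure

variable {Ω : Type*} [MeasurableSpace Ω] [TopologicalSpace Ω] [OpensMeasurableSpace Ω]
  {μ : FiniteMeasure Ω} {μs : ℕ → FiniteMeasure Ω}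

theorem tendsto_measure_univ_of_tendsto (hμ : Tendsto μs atTop (𝓝 μ)) :
    Tendsto (fun n => (μs n : Measure Ω) univ) atTop (𝓝 ((μ : Measure Ω) univ)) := by
  simpa only [ennreal_mass] using ENNReal.tendsto_coe.mpr hμ.mass

variable [HasOuterApproxClosed Ω]

theorem le_liminf_measure_open_of_tendsto (hμ : Tendsto μs atTop (𝓝 μ)) {G : Set Ω}
    (hG : IsOpen G) : (μ : Measure Ω) G ≤ liminf (fun n => (μs n : Measure Ω) G) atTop := by
  -- pass to the closed complement, using that the total masses converge
  have hcompl := limsup_measure_closed_le_of_tendsto hμ hG.isClosed_compl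
  rw [le_liminf_iff]
  intro x hx
  have hsplit (ν : FiniteMeasure Ω) :
      (ν : Measure Ω) univ = (ν : Measure Ω) G + (ν : Measure Ω) Gᶜ :=
    (measure_add_measure_compl hG.measurableSet).symm
  have hx' : (μ : Measure Ω) Gᶜ < (μ : Measure Ω) univ - x := by
    rw [lt_tsub_iff_left, hsplit μ]
    exact ENNReal.add_lt_add_right (measure_ne_top (μ : Measure Ω) _) hx
  obtain ⟨b, hb, hbx⟩ := exists_between hx'
  filter_upwards [eventually_lt_of_limsup_lt (hcompl.trans_lt hb),
    (tendsto_measure_univ_of_tendsto hμ).eventually_const_lt (lt_tsub_iff_left.mp hbx)]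
    with n hn hn'
  rw [hsplit] at hn'
  exact lt_of_add_lt_add_right (hn'.trans_le (by gcongr))

theorem lintegral_ofReal_le_liminf_of_lowerSemicontinuous (hμ : Tendsto μs atTop (𝓝 μ))
    {g : Ω → ℝ} (hg : LowerSemicontinuous g) (hg₀ : 0 ≤ g) :
    ∫⁻ x, ENNReal.ofReal (g x) ∂μ ≤
      liminf (fun n => ∫⁻ x, ENNReal.ofReal (g x) ∂μs n) atTop := by
  simp_rw [lintegral_eq_lintegral_meas_lt _ (Eventually.of_forall hg₀)
    hg.measurable.aemeasurable]
  calc ∫⁻ t in Ioi 0, (μ : Measure Ω) {x | t < g x}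
      ≤ ∫⁻ t in Ioi 0, liminf (fun n => (μs n : Measure Ω) {x | t < g x}) atTop :=
        lintegral_mono fun t => le_liminf_measure_open_of_tendsto hμ (hg.isOpen_preimage t)
    _ ≤ _ := lintegral_liminf_le fun n => Antitone.measurable fun _ _ hst =>
        measure_mono fun _ hx => hst.trans_lt hx

theorem limsup_lintegral_ofReal_le_of_upperSemicontinuous (hμ : Tendsto μs atTop (𝓝 μ))
    {g : Ω → ℝ} (hg : UpperSemicontinuous g) (hg₀ : 0 ≤ g) {c : ℝ} (hgc : ∀ x, g x ≤ c) :
    limsup (fun n => ∫⁻ x, ENNReal.ofReal (g x) ∂μs n) atTop ≤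
      ∫⁻ x, ENNReal.ofReal (g x) ∂μ := by
  obtain ⟨C, hC⟩ : ∃ C : ℝ≥0∞, C ≠ ∞ ∧ ∀ n, (μs n : Measure Ω) univ ≤ C := by
    obtain ⟨R, hR⟩ := hμ.mass.bddAbove_range
    exact ⟨R, ENNReal.coe_ne_top, fun n => by
      simpa only [← ennreal_mass, ENNReal.coe_le_coe] using hR ⟨n, rfl⟩⟩
  simp_rw [lintegral_eq_lintegral_meas_le _ (Eventually.of_forall hg₀)
    hg.measurable.aemeasurable]
  have hdom : ∀ n, (fun t => (μs n : Measure Ω) {x | t ≤ g x})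
      ≤ᵐ[volume.restrict (Ioi 0)] (Iic c).indicator fun _ => C := by
    intro n
    refine Eventually.of_forall fun t => ?_
    by_cases htc : t ≤ c
    · simpa [indicator_of_mem (show t ∈ Iic c from htc)] using
        (measure_mono (subset_univ _)).trans (hC.2 n)
    · have hempty : {x | t ≤ g x} = ∅ :=
        eq_empty_of_forall_notMem fun x hx => htc (hx.trans (hgc x))
      simp [hempty, htc]
  have hfin : ∫⁻ t in Ioi 0, (Iic c).indicator (fun _ => C) t ∂volume ≠ ∞ := by
    rw [lintegral_indicator measurableSet_Iic, setLIntegral_const,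
      Measure.restrict_apply measurableSet_Iic, Iic_inter_Ioi, Real.volume_Ioc]
    exact ENNReal.mul_ne_top hC.1 ENNReal.ofReal_ne_top
  calc limsup (fun n => ∫⁻ t in Ioi 0, (μs n : Measure Ω) {x | t ≤ g x}) atTop
      ≤ ∫⁻ t in Ioi 0, limsup (fun n => (μs n : Measure Ω) {x | t ≤ g x}) atTop :=
        limsup_lintegral_le _ (fun n => Antitone.measurable fun _ _ hst =>
          measure_mono fun _ hx => hst.trans hx) hdom hfin
    _ ≤ _ := lintegral_mono fun t =>
        limsup_measure_closed_le_of_tendsto hμ (hg.isClosed_preimage t)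

theorem lintegral_le_liminf_lintegral_of_lowerSemicontinuous (hμ : Tendsto μs atTop (𝓝 μ))
    {f : Ω → ℝ≥0∞} (hf : LowerSemicontinuous f) :
    ∫⁻ x, f x ∂μ ≤ liminf (fun n => ∫⁻ x, f x ∂μs n) atTop := by
  have htrunc (k : ℕ) : ∫⁻ x, min (f x) k ∂μ ≤ liminf (fun n => ∫⁻ x, f x ∂μs n) atTop := by
    have hk : (k : ℝ≥0∞) ≠ ∞ := ENNReal.natCast_ne_top k
    have key := lintegral_ofReal_le_liminf_of_lowerSemicontinuous hμ
      ((ENNReal.continuous_toReal_min hk).comp_lowerSemicontinuous hf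
        (ENNReal.monotone_toReal_min hk)) fun _ => ENNReal.toReal_nonneg
    simp only [Function.comp_apply, ENNReal.ofReal_toReal_min hk] at key
    exact key.trans (liminf_le_liminf (Eventually.of_forall fun n =>
      lintegral_mono fun x => min_le_left _ _))
  calc ∫⁻ x, f x ∂μ = ∫⁻ x, ⨆ k : ℕ, min (f x) k ∂μ := by
        simp only [← inf_iSup_eq, ENNReal.iSup_natCast, inf_top_eq]
    _ = ⨆ k : ℕ, ∫⁻ x, min (f x) k ∂μ :=
        lintegral_iSup (fun k => hf.measurable.min measurable_const)
          fun _ _ hij x => min_le_min_left _ (Nat.mono_cast hij)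
    _ ≤ _ := iSup_le htrunc

theorem limsup_lintegral_min_le_of_upperSemicontinuous (hμ : Tendsto μs atTop (𝓝 μ))
    {f : Ω → ℝ≥0∞} (hf : UpperSemicontinuous f) {c : ℝ≥0∞} (hc : c ≠ ∞) :
    limsup (fun n => ∫⁻ x, min (f x) c ∂μs n) atTop ≤ ∫⁻ x, min (f x) c ∂μ := by
  have key := limsup_lintegral_ofReal_le_of_upperSemicontinuous hμ
    ((ENNReal.continuous_toReal_min hc).comp_upperSemicontinuous hf
      (ENNReal.monotone_toReal_min hc)) (fun _ => ENNReal.toReal_nonneg)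
    fun x => ENNReal.toReal_mono hc (min_le_right (f x) c)
  simpa only [Function.comp_apply, ENNReal.ofReal_toReal_min hc] using key

theorem limsup_lintegral_le_lintegral_min_add_of_upperSemicontinuous
    (hμ : Tendsto μs atTop (𝓝 μ)) {f : Ω → ℝ≥0∞} (hf : UpperSemicontinuous f) {c : ℝ≥0∞}
    (hc : c ≠ ∞) :
    limsup (fun n => ∫⁻ x, f x ∂μs n) atTop ≤
      ∫⁻ x, min (f x) c ∂μ + ⨆ n, ∫⁻ x in {x | c ≤ f x}, f x ∂μs n :=
  calc limsup (fun n => ∫⁻ x, f x ∂μs n) atTop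
      ≤ limsup (fun n =>
          ∫⁻ x, min (f x) c ∂μs n + ⨆ n, ∫⁻ x in {x | c ≤ f x}, f x ∂μs n) atTop :=
        limsup_le_limsup (Eventually.of_forall fun n =>
          (lintegral_le_lintegral_min_add_setLIntegral hf.measurable c).trans
            (add_le_add_right (le_iSup (fun n => ∫⁻ x in {x | c ≤ f x}, f x ∂μs n) n) _))
    _ = limsup (fun n => ∫⁻ x, min (f x) c ∂μs n) atTop +
          ⨆ n, ∫⁻ x in {x | c ≤ f x}, f x ∂μs n :=
        limsup_add_const _ _ _ (by isBoundedDefault) (by isBoundedDefault)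
    _ ≤ _ := add_le_add_left (limsup_lintegral_min_le_of_upperSemicontinuous hμ hf hc) _

theorem limsup_lintegral_le_of_upperSemicontinuous (hμ : Tendsto μs atTop (𝓝 μ))
    {f : Ω → ℝ≥0∞} (hf : UpperSemicontinuous f)
    (hui : Tendsto (fun l : ℕ => ⨆ n, ∫⁻ x in {x | (l : ℝ≥0∞) ≤ f x}, f x ∂μs n) atTop
      (𝓝 0)) :
    limsup (fun n => ∫⁻ x, f x ∂μs n) atTop ≤ ∫⁻ x, f x ∂μ :=
  ge_of_tendsto (by simpa using tendsto_const_nhds.add hui) (Eventually.of_forall fun l =>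
    (limsup_lintegral_le_lintegral_min_add_of_upperSemicontinuous hμ hf
      (ENNReal.natCast_ne_top l)).trans
        (add_le_add_left (lintegral_mono fun _ => min_le_left _ _) _))

theorem limsup_lintegral_ne_top_of_upperSemicontinuous (hμ : Tendsto μs atTop (𝓝 μ))
    {f : Ω → ℝ≥0∞} (hf : UpperSemicontinuous f) {c : ℝ≥0∞} (hc : c ≠ ∞)
    (hfc : ⨆ n, ∫⁻ x in {x | c ≤ f x}, f x ∂μs n ≠ ∞) :
    limsup (fun n => ∫⁻ x, f x ∂μs n) atTop ≠ ∞ := by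
  refine ne_top_of_le_ne_top (ENNReal.add_ne_top.mpr ⟨?_, hfc⟩)
    (limsup_lintegral_le_lintegral_min_add_of_upperSemicontinuous hμ hf hc)
  refine ne_top_of_le_ne_top ?_ (lintegral_mono fun x => min_le_right (f x) c)
  simp [lintegral_const, ENNReal.mul_ne_top, hc]

end MeasureTheory.FiniteMeasure

/-- The hypothesis `ha` cannot be dropped: for `a n = b n = n` the left side is `0`, while
`⊤ - ⊤ = ⊥` in `EReal`. -/
theorem EReal.limsup_coe_sub_coe_le {ι : Type*} {F : Filter ι} [F.NeBot] {a b : ι → ℝ≥0∞}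
    (ha : limsup a F ≠ ∞) :
    limsup (fun i => (a i : EReal) - b i) F ≤
      ((limsup a F : ℝ≥0∞) : EReal) - (liminf b F : ℝ≥0∞) := by
  have hmono : Monotone ((↑) : ℝ≥0∞ → EReal) := fun _ _ h =>
    coe_ennreal_le_coe_ennreal_iff.mpr h
  have hlimsup : limsup (fun i => (a i : EReal)) F = limsup a F :=
    (hmono.map_limsup_of_continuousAt a continuous_coe_ennreal_ereal.continuousAt).symm
  have hliminf : liminf (fun i => (b i : EReal)) F = liminf b F :=
    (hmono.map_liminf_of_continuousAt b continuous_coe_ennreal_ereal.continuousAt).symm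
  calc limsup (fun i => (a i : EReal) - b i) F
      = limsup ((fun i => (a i : EReal)) + -fun i => (b i : EReal)) F := rfl
    _ ≤ limsup (fun i => (a i : EReal)) F + limsup (-fun i => (b i : EReal)) F := by
        refine limsup_add_le (Or.inl ?_) (Or.inl ?_) <;> rw [hlimsup]
        · exact coe_ennreal_ne_bot _
        · exact coe_ennreal_eq_top_iff.not.mpr ha
    _ = _ := by rw [limsup_neg, hlimsup, hliminf]; rfl

theorem stmt_7 {Y : Type*} [MetricSpace Y] [MeasurableSpace Y] [BorelSpace Y]
    (η : ℕ → Measure Y) (ηlim : Measure Y)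
    [∀ n, IsFiniteMeasure (η n)] [IsFiniteMeasure ηlim]
    (hweak : ∀ f : Y → ℝ, Continuous f → (∃ M, ∀ y, |f y| ≤ M) →
      Tendsto (fun n => ∫ y, f y ∂η n) atTop (nhds (∫ y, f y ∂ηlim)))
    (v : Y → EReal) (husc : UpperSemicontinuous v)
    (hui : Tendsto
      (fun l : ℕ => ⨆ n, ∫⁻ y in {y | (l : ENNReal) ≤ (v y).posPart'},
        (v y).posPart' ∂η n) atTop (nhds 0)) :
    limsup (fun n => erealIntegral (η n) v) atTop ≤ erealIntegral ηlim v := by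
  let μs : ℕ → FiniteMeasure Y := fun n => ⟨η n, inferInstance⟩
  have hμ : Tendsto μs atTop (𝓝 ⟨ηlim, inferInstance⟩) :=
    FiniteMeasure.tendsto_iff_forall_integral_tendsto.mpr fun f => hweak f f.continuous
      ⟨‖f‖, fun y => by simpa only [Real.norm_eq_abs] using f.norm_coe_le_norm y⟩
  simp only [erealIntegral, EReal.posPart'_eq_toENNReal] at hui ⊢
  have hpos : UpperSemicontinuous fun y => (v y).toENNReal :=
    EReal.continuous_toENNReal.comp_upperSemicontinuous husc fun _ _ =>
      EReal.toENNReal_le_toENNReal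
  have hneg : LowerSemicontinuous fun y => (-v y).toENNReal :=
    (EReal.continuous_toENNReal.comp continuous_neg).comp_upperSemicontinuous_antitone husc
      fun _ _ h => EReal.toENNReal_le_toENNReal (EReal.neg_le_neg_iff.mpr h)
  obtain ⟨l, hl⟩ := (hui.eventually (gt_mem_nhds ENNReal.zero_lt_top)).exists
  have hfin := FiniteMeasure.limsup_lintegral_ne_top_of_upperSemicontinuous hμ hpos
    (ENNReal.natCast_ne_top l) hl.ne
  exact (EReal.limsup_coe_sub_coe_le hfin).trans <| EReal.sub_le_sub
    (EReal.coe_ennreal_le_coe_ennreal_iff.mpr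
      (FiniteMeasure.limsup_lintegral_le_of_upperSemicontinuous hμ hpos hui))
    (EReal.coe_ennreal_le_coe_ennreal_iff.mpr
      (FiniteMeasure.lintegral_le_liminf_lintegral_of_lowerSemicontinuous hμ hneg))
end

section
/- Let S be a set, w : S → [1,∞), and p a kernel from a set of pairs (s,a) with a ∈ A(s) (A(s) a compact metric space for each s) to finite measures on S, such that for each s and each measurable v with 0 ≤ v ≤ c·w, the map a ↦ ∫_S v dp(·|s,a) is upper semicontinuous on A(s), and ∫ w dp(·|s,a) ≤ δ w(s). If (v_l) is a nonincreasing sequence of measurable functions with 0 ≤ v_l ≤ c·w and v_l(t) ↓ 0 pointwise on S, then (M v_l)(s) := sup_{a ∈ A(s)} ∫_S v_l(t) p(dt|s,a) satisfies (M v_l)(s) ↓ 0 for every s ∈ S. -/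
open MeasureTheory Filter Topology

theorem stmt_11 {S A : Type*} [MeasurableSpace S] [MetricSpace A]
    (As : S → Set A) (hAs : ∀ s, IsCompact (As s) ∧ (As s).Nonempty)
    (p : S → A → Measure S) [∀ s a, IsFiniteMeasure (p s a)]
    (w : S → ℝ) (hwm : Measurable w) (hw1 : ∀ t, 1 ≤ w t)
    (c : ℝ) (hc : 0 < c) (δ : ℝ) (hδ : 0 < δ)
    (husc : ∀ (s : S) (v : S → ℝ), Measurable v → (∀ t, 0 ≤ v t) →
      (∀ t, v t ≤ c * w t) →
      UpperSemicontinuousOn (fun a => ∫ t, v t ∂p s a) (As s))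
    (hdrift : ∀ s, ∀ a ∈ As s, ∫ t, w t ∂p s a ≤ δ * w s)
    (v : ℕ → S → ℝ) (hvm : ∀ l, Measurable (v l))
    (hv0 : ∀ l t, 0 ≤ v l t) (hvw : ∀ l t, v l t ≤ c * w t)
    (hanti : ∀ l t, v (l + 1) t ≤ v l t)
    (hptwise : ∀ t, Tendsto (fun l => v l t) atTop (nhds 0)) :
    ∀ s, Tendsto (fun l => ⨆ a ∈ As s, ∫ t, v l t ∂p s a) atTop (nhds 0) := by
  intro s
  obtain ⟨hAc, hAne⟩ := hAs s
  by_contra hcon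
  -- global antitonicity of v
  have hvanti : ∀ l l', l ≤ l' → ∀ t, v l' t ≤ v l t := by
    intro l l' h
    induction l', h using Nat.le_induction with
    | base => exact fun t => le_rfl
    | succ k hk ih => exact fun t => (hanti k t).trans (ih t)
  have hcw : ∀ t, 0 ≤ c * w t := fun t => le_trans (hv0 0 t) (hvw 0 t)
  set F : ℕ → ℝ := fun l => ⨆ a ∈ As s, ∫ t, v l t ∂p s a with hFdef
  have hF0 : ∀ l, 0 ≤ F l := fun l =>
    Real.iSup_nonneg fun a => Real.iSup_nonneg fun _ => integral_nonneg (fun t => hv0 l t)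
  -- extract ε and a subsequence with F ≥ ε
  have hexeps : ∃ ε > 0, ∃ᶠ l in atTop, ε ≤ F l := by
    rw [Metric.tendsto_atTop] at hcon
    push_neg at hcon
    obtain ⟨ε, hε, h⟩ := hcon
    refine ⟨ε, hε, frequently_atTop.2 fun N => ?_⟩
    obtain ⟨l, hl, hd⟩ := h N
    refine ⟨l, hl, ?_⟩
    rw [Real.dist_eq, sub_zero, abs_of_nonneg (hF0 l)] at hd
    exact hd
  obtain ⟨ε, hε, hfreq⟩ := hexeps
  obtain ⟨φ, hφ, hφF⟩ := Filter.extraction_of_frequently_atTop hfreq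
  -- near-maximizing actions
  have hex : ∀ k, ∃ a ∈ As s, ε/2 < ∫ t, v (φ k) t ∂p s a := by
    intro k
    by_contra h
    push_neg at h
    have hb : F (φ k) ≤ ε/2 :=
      Real.iSup_le (fun a => Real.iSup_le (fun ha => h a ha) (by positivity)) (by positivity)
    have := hφF k
    linarith
  choose a ha hIa using hex
  -- integrability at the chosen actions
  have hint : ∀ k, Integrable (v (φ k)) (p s (a k)) := by
    intro k
    by_contra h
    have := hIa k
    rw [integral_undef h] at this
    linarith
  -- truncation levels
  have hex2 : ∀ k, ∃ nk : ℕ, ε/4 < ∫ t, min (v (φ k) t) (nk : ℝ) ∂p s (a k) := by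
    intro k
    have hTend : Tendsto (fun nk : ℕ => ∫ t, min (v (φ k) t) (nk : ℝ) ∂p s (a k)) atTop
        (𝓝 (∫ t, v (φ k) t ∂p s (a k))) := by
      refine tendsto_integral_of_dominated_convergence (fun t => v (φ k) t)
        (fun nk => ((hvm (φ k)).min measurable_const).aestronglyMeasurable)
        (hint k) (fun nk => ae_of_all _ fun t => ?_) (ae_of_all _ fun t => ?_)
      · rw [Real.norm_eq_abs, abs_of_nonneg (le_min (hv0 _ t) (Nat.cast_nonneg nk))]
        exact min_le_left _ _
      · refine Tendsto.congr' ?_ tendsto_const_nhds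
        filter_upwards [eventually_ge_atTop ⌈v (φ k) t⌉₊] with nk hnk
        exact (min_eq_left ((Nat.le_ceil _).trans (Nat.cast_le.2 hnk))).symm
    have hev : ∀ᶠ nk : ℕ in atTop, ε/4 < ∫ t, min (v (φ k) t) (nk : ℝ) ∂p s (a k) :=
      hTend.eventually (eventually_gt_nhds (by linarith [hIa k]))
    exact hev.exists
  choose ntr hntr using hex2
  -- convergent subsequence in the compact set
  obtain ⟨astar, hastar, ψ, hψ, hbconv⟩ := hAc.tendsto_subseq ha
  set m : ℕ → ℕ := φ ∘ ψ with hmdef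
  set b : ℕ → A := a ∘ ψ with hbdef
  set NN : ℕ → ℕ := ntr ∘ ψ with hNNdef
  have hmmono : StrictMono m := hφ.comp hψ
  have hbmem : ∀ j, b j ∈ As s := fun j => ha (ψ j)
  have hbconv' : Tendsto b atTop (𝓝[As s] astar) :=
    tendsto_nhdsWithin_of_tendsto_nhds_of_eventually_within b hbconv
      (Eventually.of_forall hbmem)
  have htr : ∀ j, ε/4 < ∫ t, min (v (m j) t) (NN j : ℝ) ∂p s (b j) := fun j => hntr (ψ j)
  have hintb : ∀ j, Integrable (v (m j)) (p s (b j)) := fun j => hint (ψ j)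
  -- the truncated sup functions
  set g : ℕ → S → ℝ := fun i t => min (v (m i) t) (NN i : ℝ) with hgdef
  have hgmeas : ∀ i, Measurable (g i) := fun i => (hvm _).min measurable_const
  have hg0 : ∀ i t, 0 ≤ g i t := fun i t => le_min (hv0 _ t) (Nat.cast_nonneg _)
  have hgcw : ∀ i t, g i t ≤ c * w t := fun i t => (min_le_left _ _).trans (hvw _ t)
  set H : ℕ → S → ℝ := fun K t => (⨆ i, ENNReal.ofReal (g (K + i) t)).toReal with hHdef
  have hsup_le : ∀ K t, (⨆ i, ENNReal.ofReal (g (K + i) t)) ≤ ENNReal.ofReal (c * w t) :=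
    fun K t => iSup_le fun i => ENNReal.ofReal_le_ofReal (hgcw _ t)
  have hsupne : ∀ K t, (⨆ i, ENNReal.ofReal (g (K + i) t)) ≠ ⊤ :=
    fun K t => ne_top_of_le_ne_top ENNReal.ofReal_ne_top (hsup_le K t)
  have hHmeas : ∀ K, Measurable (H K) := fun K =>
    (Measurable.iSup fun i => (hgmeas (K + i)).ennreal_ofReal).ennreal_toReal
  have hH0 : ∀ K t, 0 ≤ H K t := fun K t => ENNReal.toReal_nonneg
  have hHcw : ∀ K t, H K t ≤ c * w t := fun K t =>
    ENNReal.toReal_le_of_le_ofReal (hcw t) (hsup_le K t)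
  have hHge : ∀ K i t, g (K + i) t ≤ H K t := by
    intro K i t
    have h1 : ENNReal.ofReal (g (K + i) t) ≤ ⨆ i, ENNReal.ofReal (g (K + i) t) :=
      le_iSup (fun i => ENNReal.ofReal (g (K + i) t)) i
    have h2 := ENNReal.toReal_mono (hsupne K t) h1
    rwa [ENNReal.toReal_ofReal (hg0 _ t)] at h2
  -- upper bound making H integrable along the sequence
  have hHle : ∀ K j t, H K t ≤ (((Finset.range j).sup NN : ℕ) : ℝ) + v (m j) t := by
    intro K j t
    have hB0 : (0:ℝ) ≤ (((Finset.range j).sup NN : ℕ) : ℝ) := Nat.cast_nonneg _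
    have hnn : 0 ≤ (((Finset.range j).sup NN : ℕ) : ℝ) + v (m j) t := add_nonneg hB0 (hv0 _ t)
    refine ENNReal.toReal_le_of_le_ofReal hnn (iSup_le fun i => ENNReal.ofReal_le_ofReal ?_)
    rcases lt_or_ge (K + i) j with h | h
    · have h1 : g (K+i) t ≤ (NN (K+i) : ℝ) := min_le_right _ _
      have h2 : (NN (K+i) : ℝ) ≤ (((Finset.range j).sup NN : ℕ) : ℝ) :=
        Nat.cast_le.2 (Finset.le_sup (Finset.mem_range.2 h))
      linarith [hv0 (m j) t]
    · have h1 : g (K+i) t ≤ v (m j) t :=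
        (min_le_left _ _).trans (hvanti _ _ (hmmono.monotone h) t)
      linarith
  have hHint : ∀ K j, Integrable (H K) (p s (b j)) := by
    intro K j
    refine Integrable.mono'
      (g := fun t => (((Finset.range j).sup NN : ℕ) : ℝ) + v (m j) t)
      ((integrable_const _).add (hintb j))
      (hHmeas K).aestronglyMeasurable (ae_of_all _ fun t => ?_)
    rw [Real.norm_eq_abs, abs_of_nonneg (hH0 K t)]
    exact hHle K j t
  have hgint : ∀ j, Integrable (g j) (p s (b j)) := by
    intro j
    refine Integrable.mono' (hintb j) (hgmeas j).aestronglyMeasurable (ae_of_all _ fun t => ?_)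
    rw [Real.norm_eq_abs, abs_of_nonneg (hg0 j t)]
    exact min_le_left _ _
  have hHgeint : ∀ K j, K ≤ j → ε/4 ≤ ∫ t, H K t ∂p s (b j) := by
    intro K j hKj
    have h1 : ∫ t, g j t ∂p s (b j) ≤ ∫ t, H K t ∂p s (b j) := by
      refine integral_mono (hgint j) (hHint K j) fun t => ?_
      have := hHge K (j - K) t
      rwa [Nat.add_sub_cancel' hKj] at this
    have := htr j
    linarith
  -- USC at the limit point
  have hHstar : ∀ K, ε/4 ≤ ∫ t, H K t ∂p s astar := by
    intro K
    by_contra hlt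
    push_neg at hlt
    have husc' := husc s (H K) (hHmeas K) (fun t => hH0 K t) (fun t => hHcw K t) astar hastar
    have hev := hbconv'.eventually (husc' (ε/4) hlt)
    obtain ⟨j, hj1, hj2⟩ := (hev.and (eventually_ge_atTop K)).exists
    linarith [hHgeint K j hj2]
  have hHintstar : Integrable (H 0) (p s astar) := by
    by_contra h
    have := hHstar 0
    rw [integral_undef h] at this
    linarith
  have hHanti : ∀ K t, H K t ≤ H 0 t := by
    intro K t
    refine ENNReal.toReal_mono (hsupne 0 t) (iSup_le fun i => ?_)
    have := le_iSup (fun i' => ENNReal.ofReal (g (0 + i') t)) (K + i)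
    simpa using this
  have hHtend0 : ∀ t, Tendsto (fun K => H K t) atTop (𝓝 0) := by
    intro t
    have hub : ∀ K, H K t ≤ v (m K) t := by
      intro K
      refine ENNReal.toReal_le_of_le_ofReal (hv0 (m K) t)
        (iSup_le fun i => ENNReal.ofReal_le_ofReal ?_)
      exact (min_le_left _ _).trans (hvanti _ _ (hmmono.monotone (Nat.le_add_right K i)) t)
    have h1 : Tendsto (fun K => v (m K) t) atTop (𝓝 0) :=
      (hptwise t).comp hmmono.tendsto_atTop
    exact squeeze_zero (fun K => hH0 K t) hub h1
  have hDCT : Tendsto (fun K => ∫ t, H K t ∂p s astar) atTop (𝓝 (∫ t, (0:ℝ) ∂p s astar)) := by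
    refine tendsto_integral_of_dominated_convergence (H 0)
      (fun K => (hHmeas K).aestronglyMeasurable) hHintstar
      (fun K => ae_of_all _ fun t => ?_) (ae_of_all _ fun t => hHtend0 t)
    rw [Real.norm_eq_abs, abs_of_nonneg (hH0 K t)]
    exact hHanti K t
  rw [integral_zero] at hDCT
  have hfin := ge_of_tendsto hDCT (Eventually.of_forall fun K => hHstar K)
  linarith
end
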